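/- arXiv:1803.02146 — 12 statements merged into one kernel-verified Lean document; each statement's English description precedes it below -/
import Mathlib

section
/- Let n ≥ 1 and let α be a partial contraction of [n] (α ∈ CP_n). Then α is regular in CP_n (i.e., there exists γ ∈ CP_n with α = αγα) if and only if there exists an admissible transversal T of Ker α such that |tα − t′α| = |t − t′| for all t, t′ ∈ T (i.e., the restriction of α to T is an isometry). -/
/-- A partial transformation of the chain `[n] = {1, …, n}`: a function defined on a
subset `dom ⊆ {1, …, n}` with values in `{1, …, n}` (junk value `0` outside the domain,
so that equality of partial transformations is equality of domains and of values on
the domain). -/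
structure PT (n : ℕ) where
  dom : Finset ℕ
  toFun : ℕ → ℕ
  dom_subset : dom ⊆ Finset.Icc 1 n
  maps_to : ∀ x ∈ dom, toFun x ∈ Finset.Icc 1 n
  zero_outside : ∀ x ∉ dom, toFun x = 0

namespace PT

/-- Left-to-right composition `αβ`: apply `α` first, then `β`.
`dom (αβ) = {x ∈ dom α : xα ∈ dom β}` and `x(αβ) = (xα)β`. -/
def comp {n : ℕ} (α β : PT n) : PT n where
  dom := α.dom.filter (fun x => α.toFun x ∈ β.dom)
  toFun := fun x => if x ∈ α.dom ∧ α.toFun x ∈ β.dom then β.toFun (α.toFun x) else 0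
  dom_subset := fun x hx => α.dom_subset (Finset.mem_filter.mp hx).1
  maps_to := by
    intro x hx
    rw [Finset.mem_filter] at hx
    try simp only []
    rw [if_pos ⟨hx.1, hx.2⟩]
    exact β.maps_to _ hx.2
  zero_outside := by
    intro x hx
    rw [Finset.mem_filter] at hx
    push_neg at hx
    try simp only []
    rw [if_neg]
    rintro ⟨h1, h2⟩
    exact absurd h2 (hx h1)

/-- `α` is a contraction: `|xα − yα| ≤ |x − y|` for all `x, y ∈ dom α`. -/
def IsContraction {n : ℕ} (α : PT n) : Prop :=
  ∀ x ∈ α.dom, ∀ y ∈ α.dom,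
    |(α.toFun x : ℤ) - (α.toFun y : ℤ)| ≤ |(x : ℤ) - (y : ℤ)|

/-- The image `im α = {xα : x ∈ dom α}`. -/
def im {n : ℕ} (α : PT n) : Finset ℕ := α.dom.image α.toFun

/-- `T` is a transversal of the kernel partition `Ker α`: it is contained in `dom α`
and contains exactly one element of each kernel class. -/
def IsTransversal {n : ℕ} (α : PT n) (T : Finset ℕ) : Prop :=
  T ⊆ α.dom ∧ ∀ a ∈ α.dom, ∃! t, t ∈ T ∧ α.toFun t = α.toFun a

/-- `T` is an admissible transversal of `Ker α`: a transversal such that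
`|t − t′| ≤ |a − a′|` whenever `a` is in the kernel class of `t` and `a′` in that
of `t′`. -/
def IsAdmissible {n : ℕ} (α : PT n) (T : Finset ℕ) : Prop :=
  IsTransversal α T ∧
    ∀ t ∈ T, ∀ t' ∈ T, ∀ a ∈ α.dom, ∀ a' ∈ α.dom,
      α.toFun a = α.toFun t → α.toFun a' = α.toFun t' →
        |(t : ℤ) - (t' : ℤ)| ≤ |(a : ℤ) - (a' : ℤ)|

end PT

theorem PT.ext' {n : ℕ} {α β : PT n} (h1 : α.dom = β.dom) (h2 : α.toFun = β.toFun) :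
    α = β := by
  cases α; cases β; simp_all

/-- Let `n ≥ 1` and `α ∈ CP n`. Then `α` is regular in `CP n`
iff `Ker α` has an admissible transversal `T` on which `α` is an isometry. -/
theorem regular_iff_exists_admissible_isometric_transversal
    (n : ℕ) (hn : 1 ≤ n) (α : PT n) (hα : PT.IsContraction α) :
    (∃ γ : PT n, PT.IsContraction γ ∧ α = (α.comp γ).comp α) ↔
      ∃ T : Finset ℕ, PT.IsAdmissible α T ∧
        ∀ t ∈ T, ∀ t' ∈ T,
          |(α.toFun t : ℤ) - (α.toFun t' : ℤ)| = |(t : ℤ) - (t' : ℤ)| := by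
  constructor
  · rintro ⟨γ, hγ, heq⟩
    -- Extract the key facts from α = (α ∘ γ) ∘ α
    have hdom : α.dom = ((α.comp γ).comp α).dom := congrArg PT.dom heq
    have hfun : α.toFun = ((α.comp γ).comp α).toFun := congrArg PT.toFun heq
    have key : ∀ x ∈ α.dom, α.toFun x ∈ γ.dom ∧ γ.toFun (α.toFun x) ∈ α.dom ∧
        α.toFun (γ.toFun (α.toFun x)) = α.toFun x := by
      intro x hx
      have hx' : x ∈ ((α.comp γ).comp α).dom := hdom ▸ hx
      obtain ⟨hx12, hx3⟩ := Finset.mem_filter.mp hx'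
      obtain ⟨hx1, hx2⟩ := Finset.mem_filter.mp hx12
      change (if x ∈ α.dom ∧ α.toFun x ∈ γ.dom then γ.toFun (α.toFun x) else 0) ∈ α.dom at hx3
      rw [if_pos ⟨hx1, hx2⟩] at hx3
      refine ⟨hx2, hx3, ?_⟩
      have := congrFun hfun x
      simp only [PT.comp, Finset.mem_filter] at this
      rw [if_pos ⟨⟨hx1, hx2⟩, by rw [if_pos ⟨hx1, hx2⟩]; exact hx3⟩,
        if_pos ⟨hx1, hx2⟩] at this
      exact this.symm
    set T : Finset ℕ := α.dom.image (fun x => γ.toFun (α.toFun x)) with hT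
    have hTmem : ∀ t, t ∈ T ↔ ∃ x ∈ α.dom, γ.toFun (α.toFun x) = t := by
      intro t; simp [hT]
    have hTsub : T ⊆ α.dom := by
      intro t ht
      obtain ⟨x, hx, hxt⟩ := (hTmem t).mp ht
      exact hxt ▸ (key x hx).2.1
    have hTval : ∀ t ∈ T, γ.toFun (α.toFun t) = t := by
      intro t ht
      obtain ⟨x, hx, hxt⟩ := (hTmem t).mp ht
      have : α.toFun t = α.toFun x := hxt ▸ (key x hx).2.2
      rw [this, hxt]
    refine ⟨T, ⟨⟨hTsub, ?_⟩, ?_⟩, ?_⟩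
    · intro a ha
      refine ⟨γ.toFun (α.toFun a), ⟨(hTmem _).mpr ⟨a, ha, rfl⟩, (key a ha).2.2⟩, ?_⟩
      rintro t ⟨ht, hta⟩
      rw [← hTval t ht, hta]
    · intro t ht t' ht' a ha a' ha' haa haa'
      have h1 : t = γ.toFun (α.toFun a) := by rw [haa, hTval t ht]
      have h2 : t' = γ.toFun (α.toFun a') := by rw [haa', hTval t' ht']
      rw [h1, h2]
      calc |(γ.toFun (α.toFun a) : ℤ) - (γ.toFun (α.toFun a') : ℤ)|
          ≤ |(α.toFun a : ℤ) - (α.toFun a' : ℤ)| :=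
            hγ _ (key a ha).1 _ (key a' ha').1
        _ ≤ |(a : ℤ) - (a' : ℤ)| := hα a ha a' ha'
    · intro t ht t' ht'
      have hta := hTsub ht
      have hta' := hTsub ht'
      refine le_antisymm (hα t hta t' hta') ?_
      calc |(t : ℤ) - (t' : ℤ)|
          = |(γ.toFun (α.toFun t) : ℤ) - (γ.toFun (α.toFun t') : ℤ)| := by
            rw [hTval t ht, hTval t' ht']
        _ ≤ |(α.toFun t : ℤ) - (α.toFun t' : ℤ)| :=
            hγ _ (key t hta).1 _ (key t' hta').1
  · rintro ⟨T, ⟨⟨hTsub, hTuniq⟩, _hadm⟩, hiso⟩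
    -- define γ on im α, sending y to the unique t ∈ T with α t = y
    set f : ℕ → ℕ := fun y => if h : ∃ t, t ∈ T ∧ α.toFun t = y then h.choose else 0
      with hf
    have hfspec : ∀ y ∈ α.im, f y ∈ T ∧ α.toFun (f y) = y := by
      intro y hy
      obtain ⟨a, ha, rfl⟩ := Finset.mem_image.mp hy
      obtain ⟨t, ⟨htT, hta⟩, _⟩ := hTuniq a ha
      have h : ∃ t, t ∈ T ∧ α.toFun t = α.toFun a := ⟨t, htT, hta⟩
      simp only [hf, dif_pos h]
      exact h.choose_spec
    have hfzero : ∀ y ∉ α.im, f y = 0 := by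
      intro y hy
      have h : ¬ ∃ t, t ∈ T ∧ α.toFun t = y := by
        rintro ⟨t, htT, hta⟩
        exact hy (Finset.mem_image.mpr ⟨t, hTsub htT, hta⟩)
      simp only [hf, dif_neg h]
    refine ⟨⟨α.im, f, ?_, ?_, hfzero⟩, ?_, ?_⟩
    · intro y hy
      obtain ⟨a, ha, rfl⟩ := Finset.mem_image.mp hy
      exact α.maps_to a ha
    · intro y hy
      exact α.dom_subset (hTsub (hfspec y hy).1)
    · -- γ is a contraction (indeed an isometry)
      intro y hy y' hy'
      obtain ⟨ht, hval⟩ := hfspec y hy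
      obtain ⟨ht', hval'⟩ := hfspec y' hy'
      have := hiso _ ht _ ht'
      rw [hval, hval'] at this
      simp only []
      rw [← this]
    · -- α = (α ∘ γ) ∘ α
      apply PT.ext'
      · -- domains
        ext x
        simp only [PT.comp, Finset.mem_filter]
        constructor
        · intro hx
          have hy : α.toFun x ∈ α.im := Finset.mem_image.mpr ⟨x, hx, rfl⟩
          have hft := (hfspec _ hy).1
          refine ⟨⟨hx, hy⟩, ?_⟩
          rw [if_pos ⟨hx, hy⟩]
          exact hTsub hft
        · rintro ⟨⟨hx, _⟩, _⟩; exact hx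
      · -- values
        funext x
        by_cases hx : x ∈ α.dom
        · have hy : α.toFun x ∈ α.im := Finset.mem_image.mpr ⟨x, hx, rfl⟩
          obtain ⟨hft, hfval⟩ := hfspec _ hy
          simp only [PT.comp, Finset.mem_filter]
          rw [if_pos ⟨⟨hx, hy⟩, by rw [if_pos ⟨hx, hy⟩]; exact hTsub hft⟩,
            if_pos ⟨hx, hy⟩, hfval]
        · rw [α.zero_outside x hx]
          symm
          apply PT.zero_outside
          simp only [PT.comp, Finset.mem_filter]
          rintro ⟨⟨h, _⟩, _⟩
          exact hx h
end

section
/- For every n ≥ 3 there exists a partial contraction α ∈ CP_n that is not regular in CP_n; that is, there is α ∈ CP_n such that no γ ∈ CP_n satisfies α = αγα. Hence the semigroup CP_n is not regular for n ≥ 3. -/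
/-- For every `n ≥ 3` the semigroup `CP n` is not regular: there is
a partial contraction `α` with no `γ ∈ CP n` satisfying `α = αγα`. -/
theorem cp_not_regular (n : ℕ) (hn : 3 ≤ n) :
    ∃ α : PT n, PT.IsContraction α ∧
      ¬ ∃ γ : PT n, PT.IsContraction γ ∧ α = (α.comp γ).comp α := by
  set f : ℕ → ℕ := fun x => if x = 1 then 2 else if x = 3 then 3 else 0 with hf
  refine ⟨⟨{1,3}, f, ?_, ?_, ?_⟩, ?_, ?_⟩
  · intro x hx
    simp only [Finset.mem_insert, Finset.mem_singleton] at hx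
    rcases hx with rfl | rfl <;> simp [Finset.mem_Icc] <;> omega
  · intro x hx
    simp only [Finset.mem_insert, Finset.mem_singleton] at hx
    rcases hx with rfl | rfl <;> simp [hf, Finset.mem_Icc] <;> omega
  · intro x hx
    simp only [Finset.mem_insert, Finset.mem_singleton, not_or] at hx
    simp [hf, hx.1, hx.2]
  · intro x hx y hy
    simp only [Finset.mem_insert, Finset.mem_singleton] at hx hy
    rcases hx with rfl | rfl <;> rcases hy with rfl | rfl <;> simp [hf] <;> norm_num
  · rintro ⟨γ, hγc, heq⟩
    set α : PT n := ⟨{1,3}, f, _, _, _⟩ with hα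
    have hd : α.dom = ((α.comp γ).comp α).dom := congrArg PT.dom heq
    have ht : α.toFun = ((α.comp γ).comp α).toFun := congrArg PT.toFun heq
    have hdomα : α.dom = {1,3} := rfl
    have hα1 : α.toFun 1 = 2 := rfl
    have hα3 : α.toFun 3 = 3 := rfl
    have h1m : (1:ℕ) ∈ α.dom := by rw [hdomα]; simp
    have h3m : (3:ℕ) ∈ α.dom := by rw [hdomα]; simp
    -- membership of 1 in the composite domain
    have h1c : (1:ℕ) ∈ ((α.comp γ).comp α).dom := hd ▸ h1m
    have h3c : (3:ℕ) ∈ ((α.comp γ).comp α).dom := hd ▸ h3m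
    simp only [PT.comp, Finset.mem_filter] at h1c h3c
    simp only [hα] at h1c h3c
    obtain ⟨h1c', h1in⟩ := Finset.mem_filter.mp h1c
    obtain ⟨-, h2γ⟩ := Finset.mem_filter.mp h1c'
    obtain ⟨h3c', h3in⟩ := Finset.mem_filter.mp h3c
    obtain ⟨-, h3γ⟩ := Finset.mem_filter.mp h3c'
    have hf1 : f 1 = 2 := rfl
    have hf3 : f 3 = 3 := rfl
    rw [hf1] at h2γ
    rw [hf3] at h3γ
    have c1 : (1:ℕ) ∈ ({1,3} : Finset ℕ) ∧ f 1 ∈ γ.dom := ⟨by simp, by rw [hf1]; exact h2γ⟩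
    have c3 : (3:ℕ) ∈ ({1,3} : Finset ℕ) ∧ f 3 ∈ γ.dom := ⟨by simp, by rw [hf3]; exact h3γ⟩
    rw [if_pos c1, hf1] at h1in
    rw [if_pos c3, hf3] at h3in
    -- values
    have hv1 : f 1 = f (γ.toFun 2) := by
      have := congrFun ht 1
      simp only [PT.comp] at this
      simp only [hα] at this
      rw [if_pos, if_pos c1, hf1] at this
      · exact this
      · exact ⟨Finset.mem_filter.mpr ⟨h1m, c1.2⟩, by rw [if_pos c1, hf1]; exact h1in⟩
    have hv3 : f 3 = f (γ.toFun 3) := by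
      have := congrFun ht 3
      simp only [PT.comp] at this
      simp only [hα] at this
      rw [if_pos, if_pos c3, hf3] at this
      · exact this
      · exact ⟨Finset.mem_filter.mpr ⟨h3m, c3.2⟩, by rw [if_pos c3, hf3]; exact h3in⟩
    simp only [Finset.mem_insert, Finset.mem_singleton] at h1in h3in
    have hg2 : γ.toFun 2 = 1 := by
      rcases h1in with h | h
      · exact h
      · rw [hf1, h, hf3] at hv1; omega
    have hg3 : γ.toFun 3 = 3 := by
      rcases h3in with h | h
      · rw [hf3, h, hf1] at hv3; omega
      · exact h
    have := hγc 2 h2γ 3 h3γ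
    rw [hg2, hg3] at this
    norm_num at this
end

section
/- Let n ≥ 1 and let α, β ∈ CP_n both be regular in CP_n (each x ∈ {α, β} satisfies x = xγx for some γ ∈ CP_n). Then α ℒ β in CP_n if and only if im α = im β. -/
/-- Green's `ℒ`-relation in the semigroup `CP n` of partial contractions:
`α ℒ β` iff `(CP n)¹ α = (CP n)¹ β`. -/
def GreenL {n : ℕ} (α β : PT n) : Prop :=
  (α = β ∨ ∃ γ : PT n, PT.IsContraction γ ∧ α = γ.comp β) ∧
  (β = α ∨ ∃ γ : PT n, PT.IsContraction γ ∧ β = γ.comp α)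

namespace PT

lemma ext'_s4 {n : ℕ} {α β : PT n} (hd : α.dom = β.dom) (hf : α.toFun = β.toFun) :
    α = β := by
  cases α; cases β; simp_all

lemma mem_comp_dom {n : ℕ} (α β : PT n) (x : ℕ) :
    x ∈ (α.comp β).dom ↔ x ∈ α.dom ∧ α.toFun x ∈ β.dom := by
  simp [comp, Finset.mem_filter]

lemma comp_toFun_of_mem {n : ℕ} (α β : PT n) {x : ℕ} (h1 : x ∈ α.dom)
    (h2 : α.toFun x ∈ β.dom) : (α.comp β).toFun x = β.toFun (α.toFun x) := by
  simp [comp, h1, h2]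

lemma comp_contraction {n : ℕ} {α β : PT n} (hα : IsContraction α)
    (hβ : IsContraction β) : IsContraction (α.comp β) := by
  intro x hx y hy
  rw [mem_comp_dom] at hx hy
  rw [comp_toFun_of_mem α β hx.1 hx.2, comp_toFun_of_mem α β hy.1 hy.2]
  exact le_trans (hβ _ hx.2 _ hy.2) (hα _ hx.1 _ hy.1)

lemma im_comp_subset {n : ℕ} (γ β : PT n) : (γ.comp β).im ⊆ β.im := by
  intro v hv
  rcases Finset.mem_image.mp hv with ⟨x, hx, hxv⟩
  rw [mem_comp_dom] at hx
  rw [comp_toFun_of_mem γ β hx.1 hx.2] at hxv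
  exact Finset.mem_image.mpr ⟨_, hx.2, hxv⟩

/-- Key lemma: if `β` is regular via `γ` and `im α = im β`, then `α = (αγ)β`. -/
lemma exists_factor {n : ℕ} {α β γ : PT n} (hα : IsContraction α)
    (hγ : IsContraction γ) (hreg : β = (β.comp γ).comp β) (him : α.im = β.im) :
    ∃ δ : PT n, IsContraction δ ∧ α = δ.comp β := by
  -- facts from regularity
  have key : ∀ y ∈ β.dom, β.toFun y ∈ γ.dom ∧ γ.toFun (β.toFun y) ∈ β.dom ∧
      β.toFun (γ.toFun (β.toFun y)) = β.toFun y := by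
    intro y hy
    have hd : y ∈ ((β.comp γ).comp β).dom := by rw [← hreg]; exact hy
    rw [mem_comp_dom] at hd
    obtain ⟨h1, h2⟩ := hd
    rw [mem_comp_dom] at h1
    rw [comp_toFun_of_mem β γ h1.1 h1.2] at h2
    refine ⟨h1.2, h2, ?_⟩
    conv_rhs => rw [hreg]
    have hmem : y ∈ (β.comp γ).dom := (mem_comp_dom β γ y).mpr ⟨h1.1, h1.2⟩
    rw [comp_toFun_of_mem (β.comp γ) β hmem
      (by rwa [comp_toFun_of_mem β γ h1.1 h1.2]), comp_toFun_of_mem β γ h1.1 h1.2]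
  -- facts for elements of dom α
  have keyα : ∀ x ∈ α.dom, α.toFun x ∈ γ.dom ∧ γ.toFun (α.toFun x) ∈ β.dom ∧
      β.toFun (γ.toFun (α.toFun x)) = α.toFun x := by
    intro x hx
    have : α.toFun x ∈ β.im := by
      rw [← him]; exact Finset.mem_image.mpr ⟨x, hx, rfl⟩
    rcases Finset.mem_image.mp this with ⟨y, hy, hyx⟩
    obtain ⟨k1, k2, k3⟩ := key y hy
    rw [hyx] at k1 k2 k3
    exact ⟨k1, k2, k3⟩
  refine ⟨α.comp γ, comp_contraction hα hγ, ?_⟩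
  have hdom : α.dom = ((α.comp γ).comp β).dom := by
    ext x
    rw [mem_comp_dom, mem_comp_dom]
    constructor
    · intro hx
      obtain ⟨k1, k2, _⟩ := keyα x hx
      exact ⟨⟨hx, k1⟩, by rwa [comp_toFun_of_mem α γ hx k1]⟩
    · rintro ⟨⟨hx, -⟩, -⟩; exact hx
  refine ext'_s4 hdom (funext fun x => ?_)
  by_cases hx : x ∈ α.dom
  · obtain ⟨k1, k2, k3⟩ := keyα x hx
    rw [comp_toFun_of_mem _ β, comp_toFun_of_mem α γ hx k1, k3]
    · rw [mem_comp_dom]; exact ⟨hx, k1⟩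
    · rwa [comp_toFun_of_mem α γ hx k1]
  · rw [α.zero_outside x hx, ((α.comp γ).comp β).zero_outside x (by rwa [← hdom])]

end PT

/-- For regular elements of `CP n`: `α ℒ β` iff `im α = im β`. -/
theorem greenL_iff_im_eq_of_regular (n : ℕ) (hn : 1 ≤ n) (α β : PT n)
    (hα : PT.IsContraction α) (hβ : PT.IsContraction β)
    (hrα : ∃ γ : PT n, PT.IsContraction γ ∧ α = (α.comp γ).comp α)
    (hrβ : ∃ γ : PT n, PT.IsContraction γ ∧ β = (β.comp γ).comp β) :
    GreenL α β ↔ α.im = β.im := by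
  constructor
  · rintro ⟨h1, h2⟩
    apply Finset.Subset.antisymm
    · rcases h1 with rfl | ⟨γ, -, rfl⟩
      · exact Finset.Subset.refl _
      · exact PT.im_comp_subset γ β
    · rcases h2 with rfl | ⟨γ, -, rfl⟩
      · exact Finset.Subset.refl _
      · exact PT.im_comp_subset γ α
  · intro him
    obtain ⟨γα, hγα, hrα⟩ := hrα
    obtain ⟨γβ, hγβ, hrβ⟩ := hrβ
    obtain ⟨δ1, hδ1, he1⟩ := PT.exists_factor hα hγβ hrβ him
    obtain ⟨δ2, hδ2, he2⟩ := PT.exists_factor hβ hγα hrα him.symm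
    exact ⟨Or.inr ⟨δ1, hδ1, he1⟩, Or.inr ⟨δ2, hδ2, he2⟩⟩
end

section
/- Let n ≥ 1 and let α, β ∈ CP_n both be regular in CP_n (each x ∈ {α, β} satisfies x = xγx for some γ ∈ CP_n). Then α ℛ β in CP_n if and only if dom α = dom β and ker α = ker β (for all a, b ∈ dom α: aα = bα ⇔ aβ = bβ), i.e., if and only if α and β have the same kernel partition Ker α = Ker β. -/
/-- Green's `ℛ`-relation in the semigroup `CP n` of partial contractions:
`α ℛ β` iff `α (CP n)¹ = β (CP n)¹`. -/
def GreenR {n : ℕ} (α β : PT n) : Prop :=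
  (α = β ∨ ∃ γ : PT n, PT.IsContraction γ ∧ α = β.comp γ) ∧
  (β = α ∨ ∃ γ : PT n, PT.IsContraction γ ∧ β = α.comp γ)

namespace PTAux

open PT

lemma pt_ext {n : ℕ} {α β : PT n} (hd : α.dom = β.dom) (hf : α.toFun = β.toFun) :
    α = β := by
  cases α; cases β; simp_all

lemma mem_comp_dom {n : ℕ} {β γ : PT n} {x : ℕ} :
    x ∈ (β.comp γ).dom ↔ x ∈ β.dom ∧ β.toFun x ∈ γ.dom := by
  simp [PT.comp]

lemma comp_toFun {n : ℕ} (β γ : PT n) (x : ℕ) (hx : x ∈ (β.comp γ).dom) :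
    (β.comp γ).toFun x = γ.toFun (β.toFun x) := by
  rw [mem_comp_dom] at hx
  simp only [PT.comp]
  rw [if_pos hx]

/-- Facts extracted from `α = β.comp γ`. -/
lemma comp_facts {n : ℕ} {α β γ : PT n} (h : α = β.comp γ) :
    ∀ x ∈ α.dom, x ∈ β.dom ∧ β.toFun x ∈ γ.dom ∧ α.toFun x = γ.toFun (β.toFun x) := by
  intro x hx
  have hx' : x ∈ (β.comp γ).dom := by rw [← h]; exact hx
  have hm := mem_comp_dom.mp hx'
  refine ⟨hm.1, hm.2, ?_⟩
  rw [h]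
  exact comp_toFun β γ x hx'

/-- Facts extracted from the regularity equation `α = (α.comp γ).comp α`:
for each `x ∈ dom α` the element `s x = γ(αx)` lies in `dom α` and `α (s x) = α x`. -/
lemma regular_section {n : ℕ} {α γ : PT n} (h : α = (α.comp γ).comp α) :
    ∀ x ∈ α.dom, α.toFun x ∈ γ.dom ∧ γ.toFun (α.toFun x) ∈ α.dom ∧
      α.toFun (γ.toFun (α.toFun x)) = α.toFun x := by
  intro x hx
  have hx1 : x ∈ ((α.comp γ).comp α).dom := by rw [← h]; exact hx
  have hm := mem_comp_dom.mp hx1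
  have hm2 := mem_comp_dom.mp hm.1
  have hcg : (α.comp γ).toFun x = γ.toFun (α.toFun x) := comp_toFun α γ x hm.1
  refine ⟨hm2.2, by rw [← hcg]; exact hm.2, ?_⟩
  have hf : α.toFun x = ((α.comp γ).comp α).toFun x := by rw [← h]
  rw [comp_toFun _ _ _ hx1, hcg] at hf
  exact hf.symm

/-- Key inequality: if `α` is regular (witness `γ`), `β` is a contraction with the same
domain, and `ker α ⊆ ker β`, then `β` separates points no more than `α` does. -/
lemma dist_le {n : ℕ} {α β γ : PT n} (hγ : PT.IsContraction γ) (hβ : PT.IsContraction β)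
    (h : α = (α.comp γ).comp α) (hd : α.dom = β.dom)
    (hker : ∀ a ∈ α.dom, ∀ b ∈ α.dom, α.toFun a = α.toFun b → β.toFun a = β.toFun b) :
    ∀ x ∈ α.dom, ∀ y ∈ α.dom,
      |(β.toFun x : ℤ) - (β.toFun y : ℤ)| ≤ |(α.toFun x : ℤ) - (α.toFun y : ℤ)| := by
  intro x hx y hy
  obtain ⟨hx1, hx2, hx3⟩ := regular_section h x hx
  obtain ⟨hy1, hy2, hy3⟩ := regular_section h y hy
  have hbx : β.toFun (γ.toFun (α.toFun x)) = β.toFun x := hker _ hx2 _ hx hx3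
  have hby : β.toFun (γ.toFun (α.toFun y)) = β.toFun y := hker _ hy2 _ hy hy3
  calc |(β.toFun x : ℤ) - (β.toFun y : ℤ)|
      = |(β.toFun (γ.toFun (α.toFun x)) : ℤ) - (β.toFun (γ.toFun (α.toFun y)) : ℤ)| := by
        rw [hbx, hby]
    _ ≤ |((γ.toFun (α.toFun x) : ℤ)) - ((γ.toFun (α.toFun y) : ℤ))| :=
        hβ _ (hd ▸ hx2) _ (hd ▸ hy2)
    _ ≤ |(α.toFun x : ℤ) - (α.toFun y : ℤ)| := hγ _ hx1 _ hy1

/-- The connecting element: on `im β` it sends `xβ` to `xα`. -/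
noncomputable def conn {n : ℕ} (α β : PT n) (hd : β.dom ⊆ α.dom) : PT n where
  dom := β.dom.image β.toFun
  toFun := fun z => if h : ∃ x, x ∈ β.dom ∧ β.toFun x = z then α.toFun h.choose else 0
  dom_subset := by
    intro z hz
    obtain ⟨x, hx, rfl⟩ := Finset.mem_image.mp hz
    exact β.maps_to x hx
  maps_to := by
    intro z hz
    have h : ∃ x, x ∈ β.dom ∧ β.toFun x = z := by
      obtain ⟨x, hx, rfl⟩ := Finset.mem_image.mp hz
      exact ⟨x, hx, rfl⟩
    simp only [dif_pos h]
    exact α.maps_to _ (hd h.choose_spec.1)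
  zero_outside := by
    intro z hz
    rw [dif_neg]
    intro h
    exact hz (Finset.mem_image.mpr ⟨h.choose, h.choose_spec.1, h.choose_spec.2⟩)

lemma conn_apply {n : ℕ} (α β : PT n) (hd : β.dom ⊆ α.dom)
    (hker : ∀ a ∈ β.dom, ∀ b ∈ β.dom, β.toFun a = β.toFun b → α.toFun a = α.toFun b) :
    ∀ x ∈ β.dom, (conn α β hd).toFun (β.toFun x) = α.toFun x := by
  intro x hx
  have h : ∃ y, y ∈ β.dom ∧ β.toFun y = β.toFun x := ⟨x, hx, rfl⟩
  simp only [conn, dif_pos h]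
  exact hker _ h.choose_spec.1 _ hx h.choose_spec.2

lemma conn_contraction {n : ℕ} (α β : PT n) (hd : β.dom ⊆ α.dom)
    (hker : ∀ a ∈ β.dom, ∀ b ∈ β.dom, β.toFun a = β.toFun b → α.toFun a = α.toFun b)
    (hiso : ∀ x ∈ β.dom, ∀ y ∈ β.dom,
      |(α.toFun x : ℤ) - (α.toFun y : ℤ)| ≤ |(β.toFun x : ℤ) - (β.toFun y : ℤ)|) :
    PT.IsContraction (conn α β hd) := by
  intro z hz w hw
  obtain ⟨x, hx, rfl⟩ := Finset.mem_image.mp hz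
  obtain ⟨y, hy, rfl⟩ := Finset.mem_image.mp hw
  rw [conn_apply α β hd hker x hx, conn_apply α β hd hker y hy]
  exact hiso x hx y hy

lemma comp_conn_eq {n : ℕ} (α β : PT n) (hde : β.dom = α.dom)
    (hker : ∀ a ∈ β.dom, ∀ b ∈ β.dom, β.toFun a = β.toFun b → α.toFun a = α.toFun b) :
    α = β.comp (conn α β hde.le) := by
  have hd : β.dom ⊆ α.dom := hde.le
  have hdomc : (β.comp (conn α β hd)).dom = β.dom := by
    apply Finset.filter_true_of_mem
    intro x hx
    exact Finset.mem_image.mpr ⟨x, hx, rfl⟩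
  refine pt_ext (by rw [hdomc, hde]) ?_
  funext z
  by_cases hz : z ∈ β.dom
  · have hzc : z ∈ (β.comp (conn α β hd)).dom := by rw [hdomc]; exact hz
    rw [comp_toFun _ _ _ hzc, conn_apply α β hd hker z hz]
  · rw [α.zero_outside z (by rw [← hde]; exact hz),
      (β.comp (conn α β hd)).zero_outside z (by rw [hdomc]; exact hz)]

end PTAux

/-- For regular elements of `CP n`: `α ℛ β` iff `α` and `β` have the
same domain and the same kernel. -/
theorem greenR_iff_ker_eq_of_regular (n : ℕ) (hn : 1 ≤ n) (α β : PT n)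
    (hα : PT.IsContraction α) (hβ : PT.IsContraction β)
    (hrα : ∃ γ : PT n, PT.IsContraction γ ∧ α = (α.comp γ).comp α)
    (hrβ : ∃ γ : PT n, PT.IsContraction γ ∧ β = (β.comp γ).comp β) :
    GreenR α β ↔
      α.dom = β.dom ∧
      (∀ a ∈ α.dom, ∀ b ∈ α.dom, (α.toFun a = α.toFun b ↔ β.toFun a = β.toFun b)) := by
  open PTAux in
  constructor
  · rintro ⟨h1, h2⟩
    rcases h1 with rfl | ⟨γ, hγ, hc⟩
    · exact ⟨rfl, fun a _ b _ => Iff.rfl⟩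
    rcases h2 with rfl | ⟨γ', hγ', hc'⟩
    · exact ⟨rfl, fun a _ b _ => Iff.rfl⟩
    have hd1 : α.dom ⊆ β.dom := fun x hx => (comp_facts hc x hx).1
    have hd2 : β.dom ⊆ α.dom := fun x hx => (comp_facts hc' x hx).1
    have hde : α.dom = β.dom := Finset.Subset.antisymm hd1 hd2
    refine ⟨hde, fun a ha b hb => ?_⟩
    constructor
    · intro hab
      have hfa := (comp_facts hc' a (hd1 ha)).2.2
      have hfb := (comp_facts hc' b (hd1 hb)).2.2
      rw [hfa, hfb, hab]
    · intro hab
      have hfa := (comp_facts hc a ha).2.2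
      have hfb := (comp_facts hc b hb).2.2
      rw [hfa, hfb, hab]
  · rintro ⟨hde, hker⟩
    obtain ⟨γα, hγα, hrα'⟩ := hrα
    obtain ⟨γβ, hγβ, hrβ'⟩ := hrβ
    have hkerab : ∀ a ∈ α.dom, ∀ b ∈ α.dom, α.toFun a = α.toFun b → β.toFun a = β.toFun b :=
      fun a ha b hb h => (hker a ha b hb).mp h
    have hkerba : ∀ a ∈ β.dom, ∀ b ∈ β.dom, β.toFun a = β.toFun b → α.toFun a = α.toFun b :=
      fun a ha b hb h => (hker a (hde ▸ ha) b (hde ▸ hb)).mpr h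
    -- β-distances are dominated by α-distances and conversely
    have h1 : ∀ x ∈ α.dom, ∀ y ∈ α.dom,
        |(β.toFun x : ℤ) - (β.toFun y : ℤ)| ≤ |(α.toFun x : ℤ) - (α.toFun y : ℤ)| :=
      dist_le hγα hβ hrα' hde hkerab
    have h2 : ∀ x ∈ β.dom, ∀ y ∈ β.dom,
        |(α.toFun x : ℤ) - (α.toFun y : ℤ)| ≤ |(β.toFun x : ℤ) - (β.toFun y : ℤ)| :=
      dist_le hγβ hα hrβ' hde.symm hkerba
    constructor
    · exact Or.inr ⟨conn α β hde.symm.le,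
        conn_contraction α β hde.symm.le hkerba h2,
        comp_conn_eq α β hde.symm hkerba⟩
    · exact Or.inr ⟨conn β α hde.le,
        conn_contraction β α hde.le hkerab (fun x hx y hy => h1 x hx y hy),
        comp_conn_eq β α hde hkerab⟩
end

section
/- Let n ≥ 4 and let α ∈ CP_n have at least 3 kernel classes. Suppose any two distinct kernel classes A, B of α are elementwise comparable (either a < b for all a ∈ A, b ∈ B, or b < a for all a ∈ A, b ∈ B), and suppose some kernel class K with |K| ≥ 2 is neither the least nor the greatest class, i.e., there exist kernel classes B and C with B < K < C elementwise. Then Ker α has no relatively convex transversal. -/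
/-- If `n ≥ 4`, `α ∈ CP n` has at least `3` kernel classes that are
pairwise elementwise comparable, and some kernel class of size `≥ 2` has a class
strictly below it and a class strictly above it, then `Ker α` has no relatively convex
transversal. -/
theorem no_relatively_convex_transversal (n : ℕ) (hn : 4 ≤ n) (α : PT n)
    (hα : PT.IsContraction α)
    (hclasses : 3 ≤ α.im.card)
    (hcomp : ∀ a ∈ α.dom, ∀ b ∈ α.dom, ∀ a' ∈ α.dom, ∀ b' ∈ α.dom,
      α.toFun a = α.toFun a' → α.toFun b = α.toFun b' →
      α.toFun a ≠ α.toFun b → a < b → a' < b')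
    (hk : ∃ k ∈ α.dom, ∃ k' ∈ α.dom, k ≠ k' ∧ α.toFun k = α.toFun k' ∧
      (∃ b ∈ α.dom, ∀ a ∈ α.dom, α.toFun a = α.toFun b →
        ∀ x ∈ α.dom, α.toFun x = α.toFun k → a < x) ∧
      (∃ c ∈ α.dom, ∀ x ∈ α.dom, α.toFun x = α.toFun k →
        ∀ a ∈ α.dom, α.toFun a = α.toFun c → x < a)) :
    ¬ ∃ T : Finset ℕ, PT.IsTransversal α T ∧
        ∀ x ∈ T, ∀ y ∈ T, ∀ z ∈ α.dom, x ≤ z → z ≤ y → z ∈ T := by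
  rintro ⟨T, ⟨hTsub, hTuniq⟩, hconv⟩
  obtain ⟨k, hk1, k', hk2, hkk', hfkk', ⟨b, hb, hbK⟩, ⟨c, hc, hKc⟩⟩ := hk
  obtain ⟨tB, ⟨htBT, htBf⟩, -⟩ := hTuniq b hb
  obtain ⟨tC, ⟨htCT, htCf⟩, -⟩ := hTuniq c hc
  have htBd : tB ∈ α.dom := hTsub htBT
  have htCd : tC ∈ α.dom := hTsub htCT
  have h1 : tB < k := hbK tB htBd htBf k hk1 rfl
  have h2 : tB < k' := hbK tB htBd htBf k' hk2 hfkk'.symm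
  have h3 : k < tC := hKc k hk1 rfl tC htCd htCf
  have h4 : k' < tC := hKc k' hk2 hfkk'.symm tC htCd htCf
  have hkT : k ∈ T := hconv tB htBT tC htCT k hk1 h1.le h3.le
  have hk'T : k' ∈ T := hconv tB htBT tC htCT k' hk2 h2.le h4.le
  obtain ⟨t, -, huniq⟩ := hTuniq k hk1
  exact hkk' ((huniq k ⟨hkT, rfl⟩).trans (huniq k' ⟨hk'T, hfkk'.symm⟩).symm)
end

section
/- Let n ≥ 1 and let α ∈ CP_n have p ≥ 3 kernel classes, such that any two distinct kernel classes A, B of α are elementwise comparable (either a < b for all a ∈ A, b ∈ B, or b < a for all a ∈ A, b ∈ B). If every kernel class other than the least class and the greatest class is a singleton, then Ker α has an admissible transversal. -/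
/-- If `α ∈ CP n` has `p ≥ 3` pairwise elementwise comparable kernel
classes and every class other than the least and the greatest is a singleton, then
`Ker α` has an admissible transversal. -/
theorem exists_admissible_transversal (n : ℕ) (hn : 1 ≤ n) (α : PT n)
    (hα : PT.IsContraction α)
    (hclasses : 3 ≤ α.im.card)
    (hcomp : ∀ a ∈ α.dom, ∀ b ∈ α.dom, ∀ a' ∈ α.dom, ∀ b' ∈ α.dom,
      α.toFun a = α.toFun a' → α.toFun b = α.toFun b' →
      α.toFun a ≠ α.toFun b → a < b → a' < b')
    (hsing : ∀ k ∈ α.dom,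
      (∃ b ∈ α.dom, α.toFun b ≠ α.toFun k ∧ b < k) →
      (∃ c ∈ α.dom, α.toFun c ≠ α.toFun k ∧ k < c) →
      ∀ k' ∈ α.dom, α.toFun k' = α.toFun k → k' = k) :
    ∃ T : Finset ℕ, PT.IsAdmissible α T := by
  classical
  set C : ℕ → Finset ℕ := fun v => α.dom.filter (fun x => α.toFun x = v) with hCdef
  have hCmem : ∀ v x, x ∈ C v ↔ x ∈ α.dom ∧ α.toFun x = v := by
    intro v x; simp [hCdef]
  set below : ℕ → Prop :=
    fun v => ∃ b ∈ α.dom, α.toFun b ≠ v ∧ ∃ a ∈ C v, b < a with hbelowdef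
  set rep : ℕ → ℕ := fun v =>
    if h : (C v).Nonempty then
      (if below v then (C v).min' h else (C v).max' h) else 0 with hrepdef
  have hrep_mem : ∀ v, (C v).Nonempty → rep v ∈ C v := by
    intro v h
    simp only [hrepdef, dif_pos h]
    split
    · exact (C v).min'_mem h
    · exact (C v).max'_mem h
  have hrep_dom : ∀ v, (C v).Nonempty → rep v ∈ α.dom :=
    fun v h => ((hCmem v _).mp (hrep_mem v h)).1
  have hrep_fun : ∀ v, (C v).Nonempty → α.toFun (rep v) = v :=
    fun v h => ((hCmem v _).mp (hrep_mem v h)).2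
  have hrep_min : ∀ v, (h : (C v).Nonempty) → below v → ∀ a ∈ C v, rep v ≤ a := by
    intro v h hb a ha
    simp only [hrepdef, dif_pos h, if_pos hb]
    exact (C v).min'_le a ha
  have hrep_max : ∀ v, (h : (C v).Nonempty) → ¬ below v → ∀ a ∈ C v, a ≤ rep v := by
    intro v h hb a ha
    simp only [hrepdef, dif_pos h, if_neg hb]
    exact (C v).le_max' a ha
  have hne : ∀ a ∈ α.dom, (C (α.toFun a)).Nonempty :=
    fun a ha => ⟨a, (hCmem _ _).mpr ⟨ha, rfl⟩⟩
  -- key monotonicity lemma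
  have key : ∀ v v', (C v).Nonempty → (C v').Nonempty →
      ∀ a ∈ C v, ∀ a' ∈ C v', v ≠ v' → a < a' →
      rep v < rep v' ∧ (rep v' : ℤ) - rep v ≤ (a' : ℤ) - a := by
    intro v v' h h' a ha a' ha' hvv' haa'
    obtain ⟨had, hav⟩ := (hCmem v a).mp ha
    obtain ⟨had', hav'⟩ := (hCmem v' a').mp ha'
    have htd := hrep_dom v h
    have htd' := hrep_dom v' h'
    have htf := hrep_fun v h
    have htf' := hrep_fun v' h'
    have hfaa' : α.toFun a ≠ α.toFun a' := by rw [hav, hav']; exact hvv'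
    have htt' : rep v < rep v' :=
      hcomp a had a' had' _ htd _ htd' (by rw [hav, htf]) (by rw [hav', htf']) hfaa' haa'
    have hb' : below v' := ⟨a, had, by rw [hav]; exact hvv', a', ha', haa'⟩
    have ht'a' : rep v' ≤ a' := hrep_min v' h' hb' a' ha'
    refine ⟨htt', ?_⟩
    by_cases hb : below v
    · -- class of v is a middle class: singleton, so rep v = a
      obtain ⟨b, hbd, hbv, x, hx, hbx⟩ := hb
      obtain ⟨hxd, hxv⟩ := (hCmem v x).mp hx
      have hba : b < a :=
        hcomp b hbd x hxd b hbd a had rfl (by rw [hxv, hav])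
          (by rw [hxv]; exact hbv) hbx
      have := hsing a had ⟨b, hbd, by rw [hav]; exact hbv, hba⟩
        ⟨a', had', by rw [hav']; rw [hav]; exact fun e => hvv' e.symm, haa'⟩
        (rep v) htd (by rw [htf, hav])
      rw [this]
      have : (a' : ℤ) ≥ rep v' := by exact_mod_cast ht'a'
      linarith
    · have hat : a ≤ rep v := hrep_max v h hb a ha
      have h1 : (a : ℤ) ≤ rep v := by exact_mod_cast hat
      have h2 : (rep v' : ℤ) ≤ a' := by exact_mod_cast ht'a'
      linarith
  refine ⟨α.im.image rep, ⟨?_, ?_⟩, ?_⟩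
  · -- subset
    intro x hx
    obtain ⟨v, hv, rfl⟩ := Finset.mem_image.mp hx
    obtain ⟨a, ha, rfl⟩ := Finset.mem_image.mp hv
    exact hrep_dom _ (hne a ha)
  · -- existence and uniqueness of representative
    intro a ha
    have hvne := hne a ha
    refine ⟨rep (α.toFun a), ⟨Finset.mem_image.mpr ⟨α.toFun a,
      Finset.mem_image.mpr ⟨a, ha, rfl⟩, rfl⟩, hrep_fun _ hvne⟩, ?_⟩
    rintro y ⟨hy, hyf⟩
    obtain ⟨v, hv, rfl⟩ := Finset.mem_image.mp hy
    obtain ⟨b, hb, rfl⟩ := Finset.mem_image.mp hv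
    rw [hrep_fun _ (hne b hb)] at hyf
    rw [hyf]
  · -- admissibility
    intro t ht t' ht' a ha a' ha' hat hat'
    obtain ⟨v, hv, rfl⟩ := Finset.mem_image.mp ht
    obtain ⟨x, hx, rfl⟩ := Finset.mem_image.mp hv
    obtain ⟨v', hv', rfl⟩ := Finset.mem_image.mp ht'
    obtain ⟨x', hx', rfl⟩ := Finset.mem_image.mp hv'
    have hnx := hne x hx
    have hnx' := hne x' hx'
    have haC : a ∈ C (α.toFun x) := (hCmem _ _).mpr ⟨ha, by rw [hat, hrep_fun _ hnx]⟩
    have haC' : a' ∈ C (α.toFun x') := (hCmem _ _).mpr ⟨ha', by rw [hat', hrep_fun _ hnx']⟩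
    by_cases hv : α.toFun x = α.toFun x'
    · rw [hv]
      simp only [sub_self, abs_zero] at *
      positivity
    · have hane : a ≠ a' := by
        intro e
        apply hv
        rw [← ((hCmem _ _).mp haC).2, ← ((hCmem _ _).mp haC').2, e]
      rcases lt_or_gt_of_ne hane with hlt | hlt
      · obtain ⟨h1, h2⟩ := key _ _ hnx hnx' a haC a' haC' hv hlt
        have h3 : (rep (α.toFun x) : ℤ) < rep (α.toFun x') := by exact_mod_cast h1
        have h4 : (a : ℤ) < a' := by exact_mod_cast hlt
        rw [abs_sub_comm, abs_of_nonneg (by linarith), abs_sub_comm,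
          abs_of_nonneg (by linarith)]
        linarith
      · obtain ⟨h1, h2⟩ := key _ _ hnx' hnx a' haC' a haC (Ne.symm hv) hlt
        have h3 : (rep (α.toFun x') : ℤ) < rep (α.toFun x) := by exact_mod_cast h1
        have h4 : (a' : ℤ) < a := by exact_mod_cast hlt
        rw [abs_of_nonneg (by linarith), abs_of_nonneg (by linarith)]
        linarith
end

section
/- Let n ≥ 1, let α ∈ P_n be a partial transformation of [n], and suppose Ker α has an admissible transversal T. Then α is a contraction (|xα − yα| ≤ |x − y| for all x, y ∈ dom α) if and only if |tα − t′α| ≤ |t − t′| for all t, t′ ∈ T. -/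
/-- If `Ker α` has an admissible transversal `T`, then `α` is a
contraction iff its restriction to `T` is a contraction. -/
theorem contraction_iff_on_admissible_transversal (n : ℕ) (hn : 1 ≤ n) (α : PT n)
    (T : Finset ℕ) (hT : PT.IsAdmissible α T) :
    PT.IsContraction α ↔
      ∀ t ∈ T, ∀ t' ∈ T,
        |(α.toFun t : ℤ) - (α.toFun t' : ℤ)| ≤ |(t : ℤ) - (t' : ℤ)| := by
  obtain ⟨⟨hTsub, htrans⟩, hadm⟩ := hT
  constructor
  · intro h t ht t' ht'
    exact h t (hTsub ht) t' (hTsub ht')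
  · intro h x hx y hy
    obtain ⟨t, ⟨htT, htx⟩, -⟩ := htrans x hx
    obtain ⟨t', ⟨ht'T, ht'y⟩, -⟩ := htrans y hy
    calc |(α.toFun x : ℤ) - (α.toFun y : ℤ)|
        = |(α.toFun t : ℤ) - (α.toFun t' : ℤ)| := by rw [htx, ht'y]
      _ ≤ |(t : ℤ) - (t' : ℤ)| := h t htT t' ht'T
      _ ≤ |(x : ℤ) - (y : ℤ)| := hadm t htT t' ht'T x hx y hy htx.symm ht'y.symm
end

section
/- Let n ≥ 1, let α ∈ CP_n be a partial contraction of [n], and let A ⊆ dom α be convex in [n] (i.e., whenever x, y ∈ A, z ∈ [n] and x ≤ z ≤ y, then z ∈ A). Then the image Aα = {aα : a ∈ A} is convex in [n]. -/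
/-- A subset `S ⊆ [n]` is convex if whenever `x, y ∈ S`, `z ∈ [n]` and `x ≤ z ≤ y`,
then `z ∈ S`. -/
def ConvexIn (n : ℕ) (S : Finset ℕ) : Prop :=
  ∀ x ∈ S, ∀ y ∈ S, ∀ z ∈ Finset.Icc 1 n, x ≤ z → z ≤ y → z ∈ S

private lemma discrete_ivt (f : ℕ → ℕ) :
    ∀ m a, (∀ k, a ≤ k → k < a + m → f (k+1) ≤ f k + 1 ∧ f k ≤ f (k+1) + 1) →
    ∀ z, min (f a) (f (a + m)) ≤ z → z ≤ max (f a) (f (a + m)) →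
    ∃ c, a ≤ c ∧ c ≤ a + m ∧ f c = z := by
  intro m
  induction m with
  | zero =>
    intro a _ z h1 h2
    simp only [Nat.add_zero] at h1 h2
    exact ⟨a, le_refl a, by omega, by omega⟩
  | succ m ih =>
    intro a hstep z h1 h2
    have hE : a + 1 + m = a + (m + 1) := by omega
    by_cases hc : min (f (a+1)) (f (a + (m+1))) ≤ z ∧ z ≤ max (f (a+1)) (f (a + (m+1)))
    · have hstep' : ∀ k, a + 1 ≤ k → k < a + 1 + m → f (k+1) ≤ f k + 1 ∧ f k ≤ f (k+1) + 1 :=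
        fun k hk hk' => hstep k (by omega) (by omega)
      rw [hE] at hstep'
      obtain ⟨c, hc1, hc2, hc3⟩ := ih (a+1) (by rw [hE]; exact hstep') z (by rw [hE]; exact hc.1)
        (by rw [hE]; exact hc.2)
      exact ⟨c, by omega, by omega, hc3⟩
    · have h0 := hstep a (le_refl a) (by omega)
      exact ⟨a, le_refl a, by omega, by omega⟩

/-- A partial contraction maps convex subsets of its domain to
convex subsets of `[n]`. -/
theorem image_of_convex_is_convex (n : ℕ) (hn : 1 ≤ n) (α : PT n)
    (hα : PT.IsContraction α) (A : Finset ℕ) (hA : A ⊆ α.dom)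
    (hconv : ConvexIn n A) :
    ConvexIn n (A.image α.toFun) := by
  intro x hx y hy z hz hxz hzy
  simp only [Finset.mem_image] at hx hy ⊢
  obtain ⟨a, ha, rfl⟩ := hx
  obtain ⟨b, hb, rfl⟩ := hy
  have haI := Finset.mem_Icc.mp (α.dom_subset (hA ha))
  have hbI := Finset.mem_Icc.mp (α.dom_subset (hA hb))
  have hmemA : ∀ k, min a b ≤ k → k ≤ max a b → k ∈ A := by
    intro k h1 h2
    have hk : k ∈ Finset.Icc 1 n := Finset.mem_Icc.mpr (by omega)
    rcases le_total a b with h | h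
    · exact hconv a ha b hb k hk (by omega) (by omega)
    · exact hconv b hb a ha k hk (by omega) (by omega)
  have hE : min a b + (max a b - min a b) = max a b := by omega
  have hstep : ∀ k, min a b ≤ k → k < min a b + (max a b - min a b) →
      α.toFun (k+1) ≤ α.toFun k + 1 ∧ α.toFun k ≤ α.toFun (k+1) + 1 := by
    intro k h1 h2
    have hk := hA (hmemA k h1 (by omega))
    have hk1 := hA (hmemA (k+1) (by omega) (by omega))
    have := hα k hk (k+1) hk1
    have habs : |(k:ℤ) - ((k+1:ℕ):ℤ)| = 1 := by
      push_cast
      rw [show (k:ℤ) - ((k:ℤ) + 1) = -1 by ring, abs_neg, abs_one]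
    rw [habs, abs_sub_le_iff] at this
    obtain ⟨c1, c2⟩ := this
    constructor <;> omega
  have h1 : min (α.toFun (min a b)) (α.toFun (min a b + (max a b - min a b))) ≤ z := by
    rw [hE]
    rcases le_total a b with h | h
    · rw [min_eq_left h, max_eq_right h]; omega
    · rw [min_eq_right h, max_eq_left h]; omega
  have h2 : z ≤ max (α.toFun (min a b)) (α.toFun (min a b + (max a b - min a b))) := by
    rw [hE]
    rcases le_total a b with h | h
    · rw [min_eq_left h, max_eq_right h]; omega
    · rw [min_eq_right h, max_eq_left h]; omega
  obtain ⟨c, hc1, hc2, hc3⟩ := discrete_ivt α.toFun (max a b - min a b) (min a b) hstep z h1 h2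
  exact ⟨c, hmemA c hc1 (by omega), hc3⟩
end

section
/- Let n ≥ 1 and let α ∈ CP_n be a partial contraction such that Ker α has a transversal T that is convex in [n] (i.e., T is an integer interval contained in dom α meeting each kernel class exactly once). Then there exists e ∈ ℤ such that T = {xα + e : x ∈ T}; that is, T is a translate of Tα = im α. -/
/-- If `Ker α` has a convex transversal `T` then `T` is a translate
of `Tα = im α`: there is `e ∈ ℤ` with `T = {xα + e : x ∈ T}`. -/
theorem convex_transversal_is_translate (n : ℕ) (hn : 1 ≤ n) (α : PT n)
    (hα : PT.IsContraction α) (T : Finset ℕ)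
    (hT : PT.IsTransversal α T) (hconv : ConvexIn n T) :
    ∃ e : ℤ, T.image (fun t : ℕ => (t : ℤ)) =
      T.image (fun t : ℕ => (α.toFun t : ℤ) + e) := by
  classical
  -- trivial case: T empty
  rcases T.eq_empty_or_nonempty with hTe | hTne
  · exact ⟨0, by simp [hTe]⟩
  set f : ℕ → ℤ := fun t => (α.toFun t : ℤ) with hf
  have hTdom : T ⊆ α.dom := hT.1
  have hTIcc : T ⊆ Finset.Icc 1 n := fun x hx => α.dom_subset (hTdom hx)
  -- injectivity of α on T
  have hinj : ∀ t ∈ T, ∀ t' ∈ T, α.toFun t = α.toFun t' → t = t' := by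
    intro t ht t' ht' h
    obtain ⟨u, _, hu⟩ := hT.2 t' (hTdom ht')
    exact (hu t ⟨ht, h⟩).trans (hu t' ⟨ht', rfl⟩).symm
  set a := T.min' hTne with ha
  set b := T.max' hTne with hb
  have haT : a ∈ T := T.min'_mem hTne
  have hbT : b ∈ T := T.max'_mem hTne
  -- T is an interval
  have hTint : T = Finset.Icc a b := by
    ext z
    constructor
    · intro hz
      exact Finset.mem_Icc.mpr ⟨T.min'_le z hz, T.le_max' z hz⟩
    · intro hz
      rw [Finset.mem_Icc] at hz
      have h1 : 1 ≤ z := le_trans (Finset.mem_Icc.mp (hTIcc haT)).1 hz.1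
      have h2 : z ≤ n := le_trans hz.2 (Finset.mem_Icc.mp (hTIcc hbT)).2
      exact hconv a haT b hbT z (Finset.mem_Icc.mpr ⟨h1, h2⟩) hz.1 hz.2
  have hmem : ∀ z : ℕ, a ≤ z → z ≤ b → z ∈ T := by
    intro z h1 h2; rw [hTint]; exact Finset.mem_Icc.mpr ⟨h1, h2⟩
  -- adjacent steps are ±1
  have hstep : ∀ z : ℕ, a ≤ z → z + 1 ≤ b → f (z + 1) - f z = 1 ∨ f (z + 1) - f z = -1 := by
    intro z h1 h2
    have hz : z ∈ T := hmem z h1 (by omega)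
    have hz1 : z + 1 ∈ T := hmem (z + 1) (by omega) h2
    have hc := hα (z + 1) (hTdom hz1) z (hTdom hz)
    have hne : f (z + 1) - f z ≠ 0 := by
      intro h
      have : α.toFun (z + 1) = α.toFun z := by
        have h2 : ((α.toFun (z + 1) : ℕ) : ℤ) = ((α.toFun z : ℕ) : ℤ) := sub_eq_zero.mp h
        exact_mod_cast h2
      have := hinj (z + 1) hz1 z hz this
      omega
    have : |f (z + 1) - f z| ≤ 1 := by
      have h1' : ((z + 1 : ℕ) : ℤ) - (z : ℤ) = 1 := by push_cast; ring
      calc |f (z + 1) - f z| ≤ |((z + 1 : ℕ) : ℤ) - (z : ℤ)| := hc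
        _ = 1 := by rw [h1']; simp
    rw [abs_le] at this
    omega
  by_cases hab : a < b
  · set s : ℤ := f (a + 1) - f a with hs
    have hs1 : s = 1 ∨ s = -1 := hstep a le_rfl (by omega)
    -- all consecutive steps equal s
    have hconst : ∀ k : ℕ, a + k + 1 ≤ b → f (a + k + 1) - f (a + k) = s := by
      intro k
      induction k with
      | zero => intro _; simp [hs]
      | succ k ih =>
        intro hk
        have ihk : f (a + k + 1) - f (a + k) = s := ih (by omega)
        have hd := hstep (a + k + 1) (by omega) (by omega)
        have hflip : f (a + (k + 1) + 1) - f (a + (k + 1)) ≠ -s := by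
          intro h
          have he : f (a + k + 2) = f (a + k) := by
            have h2 : a + (k + 1) + 1 = a + k + 2 := by ring
            have h3 : a + (k + 1) = a + k + 1 := by ring
            rw [h2, h3] at h
            omega
          have : α.toFun (a + k + 2) = α.toFun (a + k) := by
            have h4 : ((α.toFun (a + k + 2) : ℕ) : ℤ) = ((α.toFun (a + k) : ℕ) : ℤ) := he
            exact_mod_cast h4
          have := hinj (a + k + 2) (hmem _ (by omega) (by omega))
            (a + k) (hmem _ (by omega) (by omega)) this
          omega
        have hd' : f (a + (k + 1) + 1) - f (a + (k + 1)) = 1 ∨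
            f (a + (k + 1) + 1) - f (a + (k + 1)) = -1 := by
          have : a + (k + 1) = a + k + 1 + 0 := by ring
          rcases hd with hd | hd <;>
            [left; right] <;>
            · rw [show a + (k + 1) + 1 = a + k + 1 + 1 by ring,
                show a + (k + 1) = a + k + 1 by ring]
              exact hd
        rcases hs1 with hse | hse <;> rcases hd' with hd' | hd' <;> omega
    -- closed formula
    have hform : ∀ k : ℕ, a + k ≤ b → f (a + k) = f a + s * k := by
      intro k
      induction k with
      | zero => intro _; simp
      | succ k ih =>
        intro hk
        have h1 := hconst k (by omega)
        have h2 := ih (by omega)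
        rw [show a + (k + 1) = a + k + 1 by ring]
        push_cast
        calc f (a + k + 1) = f (a + k) + s := by linarith
          _ = f a + s * k + s := by rw [h2]
          _ = f a + s * ((k : ℤ) + 1) := by ring
    have hformT : ∀ t ∈ T, f t = f a + s * ((t : ℤ) - a) := by
      intro t ht
      rw [hTint, Finset.mem_Icc] at ht
      have : t = a + (t - a) := by omega
      rw [this, hform (t - a) (by omega)]
      have : ((t - a : ℕ) : ℤ) = (t : ℤ) - a := by
        have := ht.1; push_cast [Nat.cast_sub this]; ring
      rw [this]
      push_cast [ht.1]
      ring
    rcases hs1 with hse | hse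
    · -- increasing: e = a - f a
      refine ⟨(a : ℤ) - f a, Finset.image_congr ?_⟩
      intro t ht
      have ht' : t ∈ T := ht
      show (t : ℤ) = f t + ((a : ℤ) - f a)
      rw [hformT t ht', hse]
      ring
    · -- decreasing: e = b - f a ; image is the reversed interval
      refine ⟨(b : ℤ) - f a, ?_⟩
      have hval : ∀ t ∈ T, (fun t : ℕ => (α.toFun t : ℤ) + ((b : ℤ) - f a)) t
          = (a : ℤ) + b - t := by
        intro t ht
        show f t + ((b : ℤ) - f a) = (a : ℤ) + b - t
        rw [hformT t ht, hse]
        ring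
      rw [Finset.image_congr hval]
      ext z
      simp only [Finset.mem_image, hTint, Finset.mem_Icc]
      constructor
      · rintro ⟨t, ⟨h1, h2⟩, rfl⟩
        exact ⟨a + b - t, ⟨by omega, by omega⟩, by push_cast [Nat.cast_sub]; omega⟩
      · rintro ⟨t, ⟨h1, h2⟩, hz⟩
        exact ⟨a + b - t, ⟨by omega, by omega⟩, by push_cast [Nat.cast_sub]; omega⟩
  · -- singleton: a = b
    have hab' : a = b := le_antisymm (T.min'_le b hbT) (by omega)
    refine ⟨(a : ℤ) - f a, Finset.image_congr ?_⟩
    intro t ht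
    have ht' : t ∈ T := ht
    rw [hTint, Finset.mem_Icc] at ht'
    have hta : t = a := by omega
    show (t : ℤ) = f t + ((a : ℤ) - f a)
    rw [hta]
    ring
end

section
/- For every n ≥ 3 there exists α ∈ ORCP_n that is not regular in ORCP_n; that is, there is a partial contraction α of [n] which is order-preserving or order-reversing such that no order-preserving or order-reversing partial contraction γ satisfies α = αγα. Hence the semigroup ORCP_n is not regular for n ≥ 3. -/
/-- `α` is order-preserving: `x ≤ y` implies `xα ≤ yα` for all `x, y ∈ dom α`. -/
def OrderPres {n : ℕ} (α : PT n) : Prop :=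
  ∀ x ∈ α.dom, ∀ y ∈ α.dom, x ≤ y → α.toFun x ≤ α.toFun y

/-- `α` is order-reversing: `x ≤ y` implies `yα ≤ xα` for all `x, y ∈ dom α`. -/
def OrderRev {n : ℕ} (α : PT n) : Prop :=
  ∀ x ∈ α.dom, ∀ y ∈ α.dom, x ≤ y → α.toFun y ≤ α.toFun x

/-- For every `n ≥ 3` the semigroup `ORCP n` of order-preserving or
order-reversing partial contractions is not regular. -/
theorem orcp_not_regular (n : ℕ) (hn : 3 ≤ n) :
    ∃ α : PT n, PT.IsContraction α ∧ (OrderPres α ∨ OrderRev α) ∧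
      ¬ ∃ γ : PT n, (PT.IsContraction γ ∧ (OrderPres γ ∨ OrderRev γ)) ∧
        α = (α.comp γ).comp α := by
  classical
  set f : ℕ → ℕ := fun x => if x = 1 then 1 else if x = 3 then 2 else 0 with hf
  have hα : ∃ α : PT n, α.dom = ({1,3} : Finset ℕ) ∧ α.toFun = f := by
    refine ⟨⟨{1,3}, f, ?_, ?_, ?_⟩, rfl, rfl⟩
    · intro x hx
      fin_cases hx <;> simp [Finset.mem_Icc] <;> omega
    · intro x hx
      fin_cases hx <;> simp [f, Finset.mem_Icc] <;> omega
    · intro x hx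
      simp only [Finset.mem_insert, Finset.mem_singleton, not_or] at hx
      simp [f, hx.1, hx.2]
  obtain ⟨α, hdom, hfun⟩ := hα
  have hα1 : α.toFun 1 = 1 := by rw [hfun]; rfl
  have hα2 : α.toFun 2 = 0 := by rw [hfun]; rfl
  have hα3 : α.toFun 3 = 2 := by rw [hfun]; rfl
  refine ⟨α, ?_, Or.inl ?_, ?_⟩
  · intro x hx y hy
    rw [hdom] at hx hy
    fin_cases hx <;> fin_cases hy <;> simp [hα1, hα3] <;> norm_num
  · intro x hx y hy hxy
    rw [hdom] at hx hy
    fin_cases hx <;> fin_cases hy <;> simp [hα1, hα3] <;> omega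
  · rintro ⟨γ, ⟨hγc, _⟩, heq⟩
    have hF : ∀ x, α.toFun x = ((α.comp γ).comp α).toFun x := fun x =>
      congrFun (congrArg PT.toFun heq) x
    have h1 := hF 1
    have h3 := hF 3
    simp only [PT.comp, hα1, hα3] at h1 h3
    have hd1 : (1 : ℕ) ∈ α.dom := by rw [hdom]; simp
    have hd3 : (3 : ℕ) ∈ α.dom := by rw [hdom]; simp
    simp only [PT.comp, Finset.mem_filter, hα1, hα3, hd1, hd3, true_and] at h1 h3
    have h1' : 1 ∈ γ.dom ∧ γ.toFun 1 = 1 := by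
      by_cases hg : 1 ∈ γ.dom
      · rw [if_pos hg] at h1
        simp only [hg, true_and] at h1
        split_ifs at h1 with hm
        · refine ⟨hg, ?_⟩
          rw [hdom] at hm
          rcases Finset.mem_insert.mp hm with h | h
          · exact h
          · rw [Finset.mem_singleton] at h; rw [h, hα3] at h1; omega
      · simp [hg] at h1
    have h3' : 2 ∈ γ.dom ∧ γ.toFun 2 = 3 := by
      by_cases hg : 2 ∈ γ.dom
      · rw [if_pos hg] at h3
        simp only [hg, true_and] at h3
        split_ifs at h3 with hm
        · refine ⟨hg, ?_⟩
          rw [hdom] at hm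
          rcases Finset.mem_insert.mp hm with h | h
          · rw [h, hα1] at h3; omega
          · exact Finset.mem_singleton.mp h
      · simp [hg] at h3
    have := hγc 1 h1'.1 2 h3'.1
    rw [h1'.2, h3'.2] at this
    norm_num at this
end

section
/- Let n ≥ 1 and let α, β ∈ OCP_n be order-preserving partial contractions. Then α ℛ β in OCP_n (i.e., α = β or α = βγ₁ for some γ₁ ∈ OCP_n, and β = α or β = αγ₂ for some γ₂ ∈ OCP_n) if and only if dom α = dom β, ker α = ker β (for all a, b ∈ dom α: aα = bα ⇔ aβ = bβ), and there exists an integer e such that aβ = aα + e for all a ∈ dom α. -/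
/-- Green's `ℛ`-relation in the semigroup `OCP n` of order-preserving partial
contractions. -/
def GreenRO {n : ℕ} (α β : PT n) : Prop :=
  (α = β ∨ ∃ γ : PT n, PT.IsContraction γ ∧ OrderPres γ ∧ α = β.comp γ) ∧
  (β = α ∨ ∃ γ : PT n, PT.IsContraction γ ∧ OrderPres γ ∧ β = α.comp γ)

lemma PT.ext'_s17 {n : ℕ} {σ τ : PT n} (h1 : σ.dom = τ.dom) (h2 : σ.toFun = τ.toFun) : σ = τ := by
  cases σ; cases τ
  simp only at h1 h2
  subst h1; subst h2; rfl

/-- Given a constant translation between `α` and `β` on the common domain, build the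
witness `γ` (translation by `e` on `im α`) showing `β = α ∘ γ`. -/
lemma aux_comp {n : ℕ} (α β : PT n) (e : ℤ) (hd : α.dom = β.dom)
    (he : ∀ a ∈ α.dom, (β.toFun a : ℤ) = (α.toFun a : ℤ) + e) :
    ∃ γ : PT n, PT.IsContraction γ ∧ OrderPres γ ∧ β = α.comp γ := by
  have key : ∀ x ∈ α.im, ∃ a ∈ α.dom, α.toFun a = x ∧ ((x : ℤ) + e).toNat = β.toFun a := by
    intro x hx
    obtain ⟨a, ha, hax⟩ := Finset.mem_image.mp hx
    refine ⟨a, ha, hax, ?_⟩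
    have h := he a ha
    rw [hax] at h
    rw [← h, Int.toNat_natCast]
  have hval : ∀ x ∈ α.im, ((((x : ℤ) + e).toNat : ℤ)) = (x : ℤ) + e := by
    intro x hx
    obtain ⟨a, ha, hax, h⟩ := key x hx
    rw [h, he a ha, hax]
  refine ⟨⟨α.im, fun x => if x ∈ α.im then ((x : ℤ) + e).toNat else 0, ?_, ?_, ?_⟩,
    ?_, ?_, ?_⟩
  · intro x hx
    obtain ⟨a, ha, hax⟩ := Finset.mem_image.mp hx
    rw [← hax]
    exact α.maps_to a ha
  · intro x hx
    rw [if_pos hx]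
    obtain ⟨a, ha, hax, h⟩ := key x hx
    rw [h]
    exact β.maps_to a (hd ▸ ha)
  · intro x hx
    rw [if_neg hx]
  · show ∀ x ∈ α.im, ∀ y ∈ α.im, _
    intro x hx y hy
    simp only [if_pos hx, if_pos hy]
    rw [hval x hx, hval y hy]
    apply le_of_eq
    congr 1
    ring
  · show ∀ x ∈ α.im, ∀ y ∈ α.im, _
    intro x hx y hy hxy
    simp only [if_pos hx, if_pos hy]
    apply Int.toNat_le_toNat
    have : (x : ℤ) ≤ y := by exact_mod_cast hxy
    omega
  · apply PT.ext'_s17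
    · show β.dom = α.dom.filter _
      dsimp only
      have h : α.dom.filter (fun x => α.toFun x ∈ α.im) = α.dom :=
        Finset.filter_true_of_mem (fun x hx => Finset.mem_image_of_mem _ hx)
      rw [h, hd]
    · funext x
      show β.toFun x = if x ∈ α.dom ∧ α.toFun x ∈ α.im then _ else 0
      dsimp only
      by_cases hx : x ∈ α.dom
      · rw [if_pos ⟨hx, Finset.mem_image_of_mem _ hx⟩,
          if_pos (show α.toFun x ∈ α.im from Finset.mem_image_of_mem _ hx)]
        rw [← he x hx, Int.toNat_natCast]
      · rw [if_neg (by tauto)]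
        exact β.zero_outside x (hd ▸ hx)

lemma green_forward {n : ℕ} (α β γ₁ γ₂ : PT n)
    (hγ₁ : PT.IsContraction γ₁) (hγ₂ : PT.IsContraction γ₂) (hγ₂o : OrderPres γ₂)
    (h1 : α = β.comp γ₁) (h2 : β = α.comp γ₂) :
    α.dom = β.dom ∧ ∃ e : ℤ, ∀ a ∈ α.dom, (β.toFun a : ℤ) = (α.toFun a : ℤ) + e := by
  have hd : α.dom = β.dom := by
    apply Finset.Subset.antisymm
    · intro x hx; rw [h1] at hx; exact (Finset.mem_filter.mp hx).1
    · intro x hx; rw [h2] at hx; exact (Finset.mem_filter.mp hx).1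
  refine ⟨hd, ?_⟩
  have hv1 : ∀ a ∈ α.dom, β.toFun a ∈ γ₁.dom ∧ γ₁.toFun (β.toFun a) = α.toFun a := by
    intro a ha
    have ha' := ha
    rw [h1, PT.comp, Finset.mem_filter] at ha'
    refine ⟨ha'.2, ?_⟩
    conv_rhs => rw [h1]
    show γ₁.toFun (β.toFun a) = if a ∈ β.dom ∧ β.toFun a ∈ γ₁.dom then _ else 0
    rw [if_pos ⟨ha'.1, ha'.2⟩]
  have hv2 : ∀ a ∈ α.dom, α.toFun a ∈ γ₂.dom ∧ γ₂.toFun (α.toFun a) = β.toFun a := by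
    intro a ha
    have ha' : a ∈ β.dom := hd ▸ ha
    rw [h2, PT.comp, Finset.mem_filter] at ha'
    refine ⟨ha'.2, ?_⟩
    conv_rhs => rw [h2]
    show γ₂.toFun (α.toFun a) = if a ∈ α.dom ∧ α.toFun a ∈ γ₂.dom then _ else 0
    rw [if_pos ⟨ha'.1, ha'.2⟩]
  rcases α.dom.eq_empty_or_nonempty with hemp | ⟨a₀, ha₀⟩
  · exact ⟨0, by simp [hemp]⟩
  refine ⟨(β.toFun a₀ : ℤ) - (α.toFun a₀ : ℤ), ?_⟩
  intro a ha
  obtain ⟨hm2, hf2⟩ := hv2 a ha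
  obtain ⟨hm2', hf2'⟩ := hv2 a₀ ha₀
  obtain ⟨hm1, hf1⟩ := hv1 a ha
  obtain ⟨hm1', hf1'⟩ := hv1 a₀ ha₀
  -- isometry: |βa - βa₀| = |αa - αa₀|
  have hle1 : |(β.toFun a : ℤ) - (β.toFun a₀ : ℤ)| ≤ |(α.toFun a : ℤ) - (α.toFun a₀ : ℤ)| := by
    have := hγ₂ _ hm2 _ hm2'
    rwa [hf2, hf2'] at this
  have hle2 : |(α.toFun a : ℤ) - (α.toFun a₀ : ℤ)| ≤ |(β.toFun a : ℤ) - (β.toFun a₀ : ℤ)| := by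
    have := hγ₁ _ hm1 _ hm1'
    rwa [hf1, hf1'] at this
  have heq : |(β.toFun a : ℤ) - (β.toFun a₀ : ℤ)| = |(α.toFun a : ℤ) - (α.toFun a₀ : ℤ)| :=
    le_antisymm hle1 hle2
  rcases le_total (α.toFun a) (α.toFun a₀) with hle | hle
  · have hb : β.toFun a ≤ β.toFun a₀ := by
      rw [← hf2, ← hf2']
      exact hγ₂o _ hm2 _ hm2' hle
    have h1' : ((α.toFun a : ℤ)) ≤ (α.toFun a₀ : ℤ) := by exact_mod_cast hle
    have h2' : ((β.toFun a : ℤ)) ≤ (β.toFun a₀ : ℤ) := by exact_mod_cast hb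
    rw [abs_of_nonpos (by omega), abs_of_nonpos (by omega)] at heq
    omega
  · have hb : β.toFun a₀ ≤ β.toFun a := by
      rw [← hf2, ← hf2']
      exact hγ₂o _ hm2' _ hm2 hle
    have h1' : ((α.toFun a₀ : ℤ)) ≤ (α.toFun a : ℤ) := by exact_mod_cast hle
    have h2' : ((β.toFun a₀ : ℤ)) ≤ (β.toFun a : ℤ) := by exact_mod_cast hb
    rw [abs_of_nonneg (by omega), abs_of_nonneg (by omega)] at heq
    omega

/-- Characterization of Green's `ℛ`-relation on `OCP n`. -/
theorem ocp_greenR_iff (n : ℕ) (hn : 1 ≤ n) (α β : PT n)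
    (hα : PT.IsContraction α) (hαo : OrderPres α)
    (hβ : PT.IsContraction β) (hβo : OrderPres β) :
    GreenRO α β ↔
      α.dom = β.dom ∧
      (∀ a ∈ α.dom, ∀ b ∈ α.dom, (α.toFun a = α.toFun b ↔ β.toFun a = β.toFun b)) ∧
      (∃ e : ℤ, ∀ a ∈ α.dom, (β.toFun a : ℤ) = (α.toFun a : ℤ) + e) := by
  constructor
  · rintro ⟨h1, h2⟩
    rcases h1 with rfl | ⟨γ₁, hc1, ho1, hcomp1⟩
    · exact ⟨rfl, fun a _ b _ => Iff.rfl, 0, fun a _ => by simp⟩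
    rcases h2 with rfl | ⟨γ₂, hc2, ho2, hcomp2⟩
    · exact ⟨rfl, fun a _ b _ => Iff.rfl, 0, fun a _ => by simp⟩
    obtain ⟨hd, e, hee⟩ := green_forward α β γ₁ γ₂ hc1 hc2 ho2 hcomp1 hcomp2
    refine ⟨hd, ?_, e, hee⟩
    intro a ha b hb
    have h1 := hee a ha
    have h2 := hee b hb
    constructor <;> intro h <;> omega
  · rintro ⟨hd, hker, e, he⟩
    constructor
    · right
      obtain ⟨γ, hγc, hγo, hγeq⟩ := aux_comp β α (-e) hd.symm
        (by intro a ha; have := he a (hd ▸ ha); omega)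
      exact ⟨γ, hγc, hγo, hγeq⟩
    · right
      obtain ⟨γ, hγc, hγo, hγeq⟩ := aux_comp α β e hd he
      exact ⟨γ, hγc, hγo, hγeq⟩
end

section
/- Let n ≥ 1, let α ∈ P_n be a partial transformation of [n], and let T be an admissible transversal of Ker α. Then T is relatively convex: whenever x, y ∈ T, z ∈ dom α and x ≤ z ≤ y, one has z ∈ T. -/
/-- Every admissible transversal is relatively convex. -/
theorem admissible_transversal_relatively_convex (n : ℕ) (hn : 1 ≤ n) (α : PT n)
    (T : Finset ℕ) (hT : PT.IsAdmissible α T) :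
    ∀ x ∈ T, ∀ y ∈ T, ∀ z ∈ α.dom, x ≤ z → z ≤ y → z ∈ T := by
  intro x hx y hy z hz hxz hzy
  obtain ⟨⟨hTsub, huniq⟩, hadm⟩ := hT
  obtain ⟨t, ⟨htT, hteq⟩, -⟩ := huniq z hz
  have h1 := hadm t htT x hx z hz x (hTsub hx) hteq.symm rfl
  have h2 := hadm t htT y hy z hz y (hTsub hy) hteq.symm rfl
  have hx' : (x:ℤ) ≤ z := by exact_mod_cast hxz
  have hy' : (z:ℤ) ≤ y := by exact_mod_cast hzy
  have e1 : (t:ℤ) - x ≤ |(t:ℤ) - x| := le_abs_self _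
  have e2 : (y:ℤ) - t ≤ |(t:ℤ) - y| := by
    rw [abs_sub_comm]; exact le_abs_self _
  have a1 : |(z:ℤ) - x| = (z:ℤ) - x := abs_of_nonneg (by linarith)
  have a2 : |(z:ℤ) - y| = (y:ℤ) - z := by rw [abs_sub_comm]; exact abs_of_nonneg (by linarith)
  rw [a1] at h1; rw [a2] at h2
  have : t = z := by omega
  rwa [← this]
end
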